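/- Let A be an n×n row-stochastic upper-triangular matrix with real entries and let u, v ∈ ℝ^n. Then the sequence k ↦ uᵀ A^k v converges as k → ∞. -/

import Mathlib

open Matrix

private lemma aux_rec0 (a : ℝ) (ha0 : 0 ≤ a) (ha1 : a < 1) (d : ℕ → ℝ)
    (hd : Filter.Tendsto d Filter.atTop (nhds 0))
    (y : ℕ → ℝ) (hy : ∀ k, y (k + 1) = a * y k + d k) :
    Filter.Tendsto y Filter.atTop (nhds 0) := by
  rw [Metric.tendsto_atTop] at hd ⊢
  intro ε hε
  obtain ⟨N, hN⟩ := hd ((1 - a) * ε / 2) (by nlinarith)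
  have key : ∀ m, |y (N + m)| ≤ a ^ m * |y N| + ε / 2 := by
    intro m
    induction m with
    | zero => simp; linarith
    | succ m ih =>
      have hdN : |d (N + m)| ≤ (1 - a) * ε / 2 := by
        have := hN (N + m) (by omega)
        rw [Real.dist_eq, sub_zero] at this
        linarith
      have h1 : y (N + (m + 1)) = a * y (N + m) + d (N + m) := hy (N + m)
      calc |y (N + (m + 1))| = |a * y (N + m) + d (N + m)| := by rw [h1]
        _ ≤ |a * y (N + m)| + |d (N + m)| := abs_add_le _ _
        _ = a * |y (N + m)| + |d (N + m)| := by rw [abs_mul, abs_of_nonneg ha0]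
        _ ≤ a * (a ^ m * |y N| + ε / 2) + (1 - a) * ε / 2 := by
            have := abs_nonneg (y (N + m))
            nlinarith
        _ ≤ a ^ (m + 1) * |y N| + ε / 2 := by ring_nf; nlinarith
  have hpow : Filter.Tendsto (fun m : ℕ => a ^ m * |y N| + ε / 2)
      Filter.atTop (nhds (ε / 2)) := by
    have := (tendsto_pow_atTop_nhds_zero_of_lt_one ha0 ha1).mul_const (|y N|)
    simpa using this.add_const (ε / 2)
  have hev : ∀ᶠ m in Filter.atTop, a ^ m * |y N| + ε / 2 < ε :=
    hpow.eventually_lt_const (by linarith)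
  obtain ⟨M, hM⟩ := Filter.eventually_atTop.mp hev
  refine ⟨N + M, fun k hk => ?_⟩
  rw [Real.dist_eq, sub_zero]
  have h1 : k = N + (k - N) := by omega
  have h2 := key (k - N)
  have h3 := hM (k - N) (by omega)
  rw [← h1] at h2
  linarith
private lemma aux_rec (a : ℝ) (ha0 : 0 ≤ a) (ha1 : a < 1) (c : ℕ → ℝ) (cl : ℝ)
    (hc : Filter.Tendsto c Filter.atTop (nhds cl))
    (x : ℕ → ℝ) (hx : ∀ k, x (k + 1) = a * x k + c k) :
    Filter.Tendsto x Filter.atTop (nhds (cl / (1 - a))) := by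
  set L := cl / (1 - a) with hLdef
  have h1a : (1 : ℝ) - a ≠ 0 := by linarith
  have hL : a * L + cl = L := by
    rw [hLdef]
    field_simp
    ring
  have h0 := aux_rec0 a ha0 ha1 (fun k => c k - cl)
    (by simpa using hc.sub_const cl)
    (fun k => x k - L)
    (fun k => by simp only [hx]; linarith)
  have := h0.add_const L
  simpa using this

/-- For a real row-stochastic upper-triangular matrix `A` and vectors `u, v`,
the sequence `k ↦ uᵀ A^k v` converges. -/
theorem stmt_10 (n : ℕ) (A : Matrix (Fin n) (Fin n) ℝ) (u v : Fin n → ℝ)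
    (hnonneg : ∀ i j, 0 ≤ A i j)
    (hrow : ∀ i, ∑ j, A i j = 1)
    (hupper : ∀ i j : Fin n, j < i → A i j = 0) :
    ∃ L : ℝ, Filter.Tendsto (fun k : ℕ => u ⬝ᵥ ((A ^ k) *ᵥ v))
      Filter.atTop (nhds L) := by
  set g : Fin n → ℕ → ℝ := fun i k => ((A ^ k) *ᵥ v) i with hg
  have hgrec : ∀ (i : Fin n) (k : ℕ), g i (k + 1) = ∑ j, A i j * g j k := by
    intro i k
    have : A ^ (k + 1) = A * A ^ k := by rw [pow_succ']
    simp only [hg, this, ← mulVec_mulVec]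
    rfl
  have hdiag_le : ∀ i : Fin n, A i i ≤ 1 := by
    intro i
    rw [← hrow i]
    exact Finset.single_le_sum (fun j _ => hnonneg i j) (Finset.mem_univ i)
  have main : ∀ (m : ℕ) (i : Fin n), n - i.val ≤ m →
      ∃ L, Filter.Tendsto (g i) Filter.atTop (nhds L) := by
    intro m
    induction m with
    | zero => intro i hi; exact absurd hi (by have := i.isLt; omega)
    | succ m ih =>
      intro i hi
      rcases eq_or_lt_of_le (hdiag_le i) with hd1 | hd1
      · -- absorbing state: row i is e_i
        have hoff : ∀ j, j ≠ i → A i j = 0 := by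
          intro j hj
          have hsum : ∑ j ∈ Finset.univ.erase i, A i j = 0 := by
            have := Finset.add_sum_erase Finset.univ (A i) (Finset.mem_univ i)
            rw [hrow i, ← hd1] at this
            linarith
          have := (Finset.sum_eq_zero_iff_of_nonneg
            (fun j _ => hnonneg i j)).mp hsum
          exact this j (Finset.mem_erase.mpr ⟨hj, Finset.mem_univ j⟩)
        have hconst : ∀ k, g i k = g i 0 := by
          intro k
          induction k with
          | zero => rfl
          | succ k ihk =>
            rw [hgrec i k, Finset.sum_eq_single i
              (fun j _ hj => by rw [hoff j hj, zero_mul]) (by simp), hd1, one_mul]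
            exact ihk
        refine ⟨g i 0, ?_⟩
        have : g i = fun _ => g i 0 := funext hconst
        rw [this]
        exact tendsto_const_nhds
      · -- contracting state
        set B : Fin n → ℝ := fun j => if j = i then 0 else A i j with hB
        have hBterm : ∀ j : Fin n,
            ∃ Lj, Filter.Tendsto (fun k => B j * g j k) Filter.atTop (nhds Lj) := by
          intro j
          rcases eq_or_ne j i with rfl | hji
          · exact ⟨0, by simp [hB]⟩
          · rcases lt_or_gt_of_ne hji with hlt | hgt
            · refine ⟨0, ?_⟩
              have : ∀ k, B j * g j k = 0 := by
                intro k; simp [hB, hji, hupper i j hlt]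
              simp only [funext this]; exact tendsto_const_nhds
            · obtain ⟨Lj, hLj⟩ := ih j (by
                have h1 : i.val < j.val := hgt
                omega)
              exact ⟨B j * Lj, hLj.const_mul _⟩
        choose Lf hLf using hBterm
        have hsplit : ∀ k, g i (k + 1) = A i i * g i k + ∑ j, B j * g j k := by
          intro k
          rw [hgrec i k]
          have : ∀ j : Fin n, A i j * g j k =
              (if j = i then A i i * g i k else 0) + B j * g j k := by
            intro j
            rcases eq_or_ne j i with rfl | hji
            · simp [hB]
            · simp [hB, hji]
          rw [Finset.sum_congr rfl (fun j _ => this j), Finset.sum_add_distrib,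
            Finset.sum_ite_eq' Finset.univ i]
          simp
        have hc : Filter.Tendsto (fun k => ∑ j, B j * g j k)
            Filter.atTop (nhds (∑ j, Lf j)) :=
          tendsto_finset_sum _ (fun j _ => hLf j)
        exact ⟨_, aux_rec (A i i) (hnonneg i i) hd1 _ _ hc (g i) hsplit⟩
  have hcoord : ∀ i : Fin n, ∃ L, Filter.Tendsto (g i) Filter.atTop (nhds L) :=
    fun i => main n i (by omega)
  choose L hL using hcoord
  refine ⟨∑ i, u i * L i, ?_⟩
  have : (fun k : ℕ => u ⬝ᵥ ((A ^ k) *ᵥ v)) = fun k => ∑ i, u i * g i k := by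
    funext k; rfl
  rw [this]
  exact tendsto_finset_sum _ (fun i _ => (hL i).const_mul (u i))
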